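/- arXiv:2406.14218 — 3 statements merged into one kernel-verified Lean document; each statement's English description precedes it below -/
import Mathlib

section
/- Let p > 1 and κ = (p−1)^{-1/(p−1)}. Define Ñ : ℝ → ℝ by Ñ(s) = |κ+s|^{p−1}(κ+s) − κᵖ − pκ^{p−1}s for s ≥ −κ, and Ñ(s) = (p−1)κᵖ − 2pκ^{p−1}(κ+s) + (κ+s)² for s < −κ. Then Ñ is a convex function on ℝ. -/
open Real

/-- `κ = (p−1)^{-1/(p−1)}`. -/
noncomputable def kappa (p : ℝ) : ℝ := (p - 1) ^ (-(1 / (p - 1)) : ℝ)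

/-- The truncated nonlinearity `Ñ`. -/
noncomputable def Ntil (p : ℝ) (s : ℝ) : ℝ :=
  if -(kappa p) ≤ s then
    |kappa p + s| ^ (p - 1) * (kappa p + s) - (kappa p) ^ p -
      p * (kappa p) ^ (p - 1) * s
  else
    (p - 1) * (kappa p) ^ p - 2 * p * (kappa p) ^ (p - 1) * (kappa p + s) +
      (kappa p + s) ^ 2

open Set

/-!
With `t = κ + s` and `c = p κ^{p-1}`, one has `p κ^p = c κ`, and this turns both branches of `Ñ`
into a single formula
`Ñ(s) = t⁺ ^ p + t⁻ ^ 2 + c t⁻ - c t + (p - 1) κ^p`.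
Each term is convex in `t`: `t⁺` and `t⁻` are convex and nonnegative, and `u ↦ u^p`, `u ↦ u^2`
are convex and monotone on `[0, ∞)`; `c ≥ 0` and the rest is affine.
-/

theorem ConvexOn.comp_of_mapsTo {E : Type*} [AddCommGroup E] [Module ℝ E] {s : Set E}
    {t : Set ℝ} {f : E → ℝ} {g : ℝ → ℝ} (hg : ConvexOn ℝ t g) (hg' : MonotoneOn g t)
    (hf : ConvexOn ℝ s f) (hfst : MapsTo f s t) : ConvexOn ℝ s (g ∘ f) := by
  refine ⟨hf.1, fun x hx y hy a b ha hb hab => ?_⟩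
  have hmem : a • f x + b • f y ∈ t := hg.1 (hfst hx) (hfst hy) ha hb hab
  calc g (f (a • x + b • y)) ≤ g (a • f x + b • f y) :=
        hg' (hfst (hf.1 hx hy ha hb hab)) hmem (hf.2 hx hy ha hb hab)
    _ ≤ a • g (f x) + b • g (f y) := hg.2 (hfst hx) (hfst hy) ha hb hab

theorem convexOn_posPart : ConvexOn ℝ univ fun t : ℝ => t⁺ :=
  (convexOn_id convex_univ).sup (convexOn_const 0 convex_univ)

theorem convexOn_negPart : ConvexOn ℝ univ fun t : ℝ => t⁻ :=
  (concaveOn_id convex_univ).neg.sup (convexOn_const 0 convex_univ)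

theorem convexOn_posPart_rpow {p : ℝ} (hp : 1 ≤ p) : ConvexOn ℝ univ fun t : ℝ => t⁺ ^ p :=
  (convexOn_rpow hp).comp_of_mapsTo (monotoneOn_rpow_Ici_of_exponent_nonneg (by linarith))
    convexOn_posPart fun t _ => posPart_nonneg t

theorem convexOn_negPart_sq : ConvexOn ℝ univ fun t : ℝ => t⁻ ^ 2 :=
  (convexOn_pow 2).comp_of_mapsTo pow_left_monotoneOn convexOn_negPart
    fun t _ => negPart_nonneg t

theorem convexOn_Ntil_profile {p c : ℝ} (hp : 1 ≤ p) (hc : 0 ≤ c) :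
    ConvexOn ℝ univ fun t : ℝ => t⁺ ^ p + t⁻ ^ 2 + c * t⁻ - c * t :=
  (((convexOn_posPart_rpow hp).add convexOn_negPart_sq).add (convexOn_negPart.smul hc)).sub
    ((concaveOn_id convex_univ).smul hc)

theorem rpow_sub_one_mul_self {p t : ℝ} (hp : p ≠ 0) (ht : 0 ≤ t) : t ^ (p - 1) * t = t ^ p := by
  rw [← rpow_add_one' ht (by simpa using hp), sub_add_cancel]

theorem Ntil_eq_profile {p : ℝ} (hp : 1 < p) (s : ℝ) :
    Ntil p s = (kappa p + s)⁺ ^ p + (kappa p + s)⁻ ^ 2 + p * kappa p ^ (p - 1) * (kappa p + s)⁻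
      - p * kappa p ^ (p - 1) * (kappa p + s) + (p - 1) * kappa p ^ p := by
  have hp0 : p ≠ 0 := by linarith
  rw [Ntil]
  split_ifs with hs
  · have ht : 0 ≤ kappa p + s := by linarith
    have hκp := rpow_sub_one_mul_self (t := kappa p) hp0 (rpow_nonneg (sub_nonneg.2 hp.le) _)
    rw [abs_of_nonneg ht, rpow_sub_one_mul_self hp0 ht, posPart_of_nonneg ht,
      negPart_of_nonneg ht]
    linear_combination p * hκp
  · have ht : kappa p + s ≤ 0 := by linarith
    rw [posPart_of_nonpos ht, negPart_of_nonpos ht, zero_rpow hp0]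
    ring

theorem Ntil_convex (p : ℝ) (hp : 1 < p) : ConvexOn ℝ Set.univ (Ntil p) := by
  have hc : 0 ≤ p * kappa p ^ (p - 1) :=
    mul_nonneg (by linarith) (rpow_nonneg (rpow_nonneg (by linarith) _) _)
  have hprofile := ((convexOn_Ntil_profile hp.le hc).translate_right (kappa p)).add_const
    ((p - 1) * kappa p ^ p)
  rw [funext (Ntil_eq_profile hp)]
  exact hprofile
end

section
/- Let p > 1, κ = (p−1)^{-1/(p−1)}, and define Ñ as in the piecewise formula: Ñ(s) = |κ+s|^{p−1}(κ+s) − κᵖ − pκ^{p−1}s for s ≥ −κ and Ñ(s) = (p−1)κᵖ − 2pκ^{p−1}(κ+s) + (κ+s)² for s < −κ. Then Ñ(s) > 0 for all s > 0, and there exists S > 1 such that Ñ(s) > sᵖ/2 for all s > S. -/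
open Real

/-!
On `s > -κ`, `Ñ(s)` is the gap between `x ↦ x ^ p` at `κ + s` and its tangent line at `κ`; the
value of `κ` only matters through `κ > 0`. Strict convexity (Bernoulli's inequality) makes the gap
positive, and since `(κ + s) ^ p ≥ s ^ p` while the tangent line is affine in `s`, the gap
eventually exceeds `s ^ p / 2`.
-/

open Filter

lemma kappa_pos {p : ℝ} (hp : 1 < p) : 0 < kappa p :=
  rpow_pos_of_pos (by linarith) _

lemma Ntil_eq_of_neg_kappa_lt {p s : ℝ} (hs : -kappa p < s) :
    Ntil p s = (kappa p + s) ^ p - kappa p ^ p - p * kappa p ^ (p - 1) * s := by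
  have hpos : 0 < kappa p + s := by linarith
  rw [Ntil, if_pos hs.le, abs_of_pos hpos, rpow_sub_one hpos.ne', div_mul_cancel₀ _ hpos.ne']

lemma rpow_add_mul_rpow_sub_one_lt_add_rpow {a s p : ℝ} (ha : 0 < a) (hs : -a ≤ s)
    (hs₀ : s ≠ 0) (hp : 1 < p) : a ^ p + p * a ^ (p - 1) * s < (a + s) ^ p := by
  have hsa : -1 ≤ s / a := by rw [le_div_iff₀ ha]; linarith
  have hbern : 1 + p * (s / a) < (1 + s / a) ^ p :=
    one_add_mul_self_lt_rpow_one_add hsa (div_ne_zero hs₀ ha.ne') hp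
  calc a ^ p + p * a ^ (p - 1) * s = a ^ p * (1 + p * (s / a)) := by
        rw [rpow_sub_one ha.ne']; field_simp
    _ < a ^ p * (1 + s / a) ^ p := mul_lt_mul_of_pos_left hbern (rpow_pos_of_pos ha p)
    _ = (a + s) ^ p := by
        rw [← mul_rpow ha.le (by linarith)]
        congr 1; field_simp

lemma eventually_add_mul_lt_rpow_div_two {p : ℝ} (hp : 1 < p) (a b : ℝ) :
    ∀ᶠ s in atTop, a + b * s < s ^ p / 2 := by
  filter_upwards [(tendsto_rpow_atTop (by linarith : 0 < p - 1)).eventually_gt_atTop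
    (2 * (|a| + |b|)), eventually_ge_atTop 1] with s hgrowth hs
  have hsplit : s ^ p = s ^ (p - 1) * s := by
    rw [rpow_sub_one (by linarith), div_mul_cancel₀ _ (by linarith)]
  calc a + b * s ≤ (|a| + |b|) * s := by
        nlinarith [le_abs_self a, le_abs_self b, abs_nonneg a]
    _ < s ^ p / 2 := by rw [hsplit]; nlinarith

theorem Ntil_pos_and_superlinear (p : ℝ) (hp : 1 < p) :
    (∀ s : ℝ, 0 < s → 0 < Ntil p s) ∧
    ∃ S : ℝ, 1 < S ∧ ∀ s : ℝ, S < s → s ^ p / 2 < Ntil p s := by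
  have hκ := kappa_pos hp
  have hNtil : ∀ s : ℝ, 0 < s →
      Ntil p s = (kappa p + s) ^ p - kappa p ^ p - p * kappa p ^ (p - 1) * s :=
    fun s hs => Ntil_eq_of_neg_kappa_lt (by linarith)
  refine ⟨fun s hs => ?_, ?_⟩
  · have := rpow_add_mul_rpow_sub_one_lt_add_rpow hκ (by linarith) hs.ne' hp
    rw [hNtil s hs]; linarith
  · obtain ⟨S, hS⟩ := eventually_atTop.1
      (eventually_add_mul_lt_rpow_div_two hp (kappa p ^ p) (p * kappa p ^ (p - 1)))
    refine ⟨max S 1 + 1, by linarith [le_max_right S 1], fun s hs => ?_⟩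
    have hs₀ : 0 < s := by linarith [le_max_right S 1]
    have hmono : s ^ p ≤ (kappa p + s) ^ p :=
      rpow_le_rpow hs₀.le (by linarith) (by linarith)
    have := hS s (by linarith [le_max_left S 1])
    rw [hNtil s hs₀]; linarith
end

section
/- There exists C > 0 such that for every f in the weighted Sobolev space H¹_ρ(ℝⁿ) (with ρ(z) = e^{-|z|²/4}), one has ∫_{ℝⁿ} |z|² f(z)² e^{-|z|²/4} dz ≤ C (‖f‖²_ρ + ‖∇f‖²_ρ). -/
open MeasureTheory Real

noncomputable def rho (n : ℕ) (z : Fin n → ℝ) : ℝ := Real.exp (-(∑ i, (z i) ^ 2) / 4)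

/-!
Since `∂ᵢρ = -(zᵢ/2) ρ`, integrating `∂ᵢ(zᵢ) = 1` by parts against `f²ρ` gives
`∫ zᵢ² f² ρ = 2 ∫ f² ρ + 4 ∫ zᵢ f ∂ᵢf ρ`. Bounding the cross term by
`zᵢ f ∂ᵢf ≤ zᵢ² f² / 8 + 2 (∂ᵢf)²` and absorbing yields
`∫ zᵢ² f² ρ ≤ 4 ∫ f² ρ + 16 ∫ (∂ᵢf)² ρ`; summing over `i` gives the theorem with `C = 4n + 16`.
-/

theorem MeasureTheory.Integrable.of_sum_of_nonneg {ι α : Type*} [MeasurableSpace α]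
    {μ : Measure α} {s : Finset ι} {g : ι → α → ℝ} (h : Integrable (fun x => ∑ i ∈ s, g i x) μ)
    (hg : ∀ i ∈ s, ∀ x, 0 ≤ g i x) {i : ι} (hi : i ∈ s) (hgi : AEStronglyMeasurable (g i) μ) :
    Integrable (g i) μ :=
  h.mono' hgi <| .of_forall fun x => by
    rw [norm_of_nonneg (hg i hi x)]
    exact Finset.single_le_sum (fun j hj => hg j hj x) hi

theorem rho_pos (n : ℕ) (z : Fin n → ℝ) : 0 < rho n z := exp_pos _

theorem integral_sq_mul_rho_nonneg (n : ℕ) (g : (Fin n → ℝ) → ℝ) :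
    0 ≤ ∫ z, g z ^ 2 * rho n z :=
  integral_nonneg fun z => mul_nonneg (sq_nonneg _) (rho_pos n z).le

@[fun_prop]
theorem continuous_rho (n : ℕ) : Continuous (rho n) := by
  unfold rho
  fun_prop

theorem hasFDerivAt_rho (n : ℕ) (z : Fin n → ℝ) :
    HasFDerivAt (rho n) (-(rho n z / 2) • ∑ i, z i • ContinuousLinearMap.proj (R := ℝ) i) z := by
  have hsq : HasFDerivAt (fun w : Fin n → ℝ => ∑ i, w i ^ 2)
      (∑ i, (2 * z i) • ContinuousLinearMap.proj (R := ℝ) i) z :=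
    HasFDerivAt.fun_sum fun i _ => by simpa using (hasFDerivAt_apply (𝕜 := ℝ) i z).pow 2
  have hrho : rho n = fun w => exp (-1 / 4 * ∑ i, w i ^ 2) := by
    ext w
    simp only [rho]
    ring_nf
  rw [hrho] at *
  refine (hsq.const_mul (-1 / 4)).exp.congr_fderiv ?_
  ext v
  simp only [Finset.mul_sum, smul_apply, sum_apply, ContinuousLinearMap.proj_apply, smul_eq_mul]
  ring_nf

theorem fderiv_rho_single (n : ℕ) (z : Fin n → ℝ) (i : Fin n) :
    fderiv ℝ (rho n) z (Pi.single i 1) = -(z i / 2 * rho n z) := by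
  simp only [(hasFDerivAt_rho n z).fderiv, smul_apply, sum_apply, ContinuousLinearMap.proj_apply,
    Pi.single_apply, smul_eq_mul, mul_ite, mul_one, mul_zero, Finset.sum_ite_eq', Finset.mem_univ,
    if_true]
  ring

section

variable {n : ℕ} {f : (Fin n → ℝ) → ℝ}

theorem fderiv_sq_mul_rho_single {z : Fin n → ℝ} (hf : DifferentiableAt ℝ f z) (i : Fin n) :
    fderiv ℝ (fun w => f w ^ 2 * rho n w) z (Pi.single i 1) =
      2 * f z * fderiv ℝ f z (Pi.single i 1) * rho n z - z i / 2 * (f z ^ 2 * rho n z) := by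
  rw [fderiv_fun_mul (c := fun w => f w ^ 2) (hf.pow 2) (hasFDerivAt_rho n z).differentiableAt]
  simp only [fderiv_fun_pow 2 hf, add_apply, smul_apply, fderiv_rho_single, smul_eq_mul]
  ring

theorem integrable_coord_mul_sq_mul_rho (hf : Continuous f) (i : Fin n)
    (hA : Integrable fun z => f z ^ 2 * rho n z)
    (hD : Integrable fun z => z i ^ 2 * f z ^ 2 * rho n z) :
    Integrable fun z => z i * (f z ^ 2 * rho n z) := by
  refine ((hA.add hD).div_const 2).mono' (by fun_prop) (.of_forall fun z => ?_)
  have hw : 0 ≤ f z ^ 2 * rho n z := mul_nonneg (sq_nonneg _) (rho_pos n z).le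
  have hz : |z i| ≤ (1 + z i ^ 2) / 2 := by
    nlinarith [abs_mul_abs_self (z i), sq_nonneg (|z i| - 1)]
  rw [norm_mul, norm_of_nonneg hw, Real.norm_eq_abs]
  calc |z i| * (f z ^ 2 * rho n z) ≤ (1 + z i ^ 2) / 2 * (f z ^ 2 * rho n z) := by gcongr
    _ = _ := by simp only [Pi.add_apply]; ring

theorem integrable_coord_mul_mul_fderiv_mul_rho (hf : Continuous f) (i : Fin n)
    (hB : Integrable fun z => fderiv ℝ f z (Pi.single i 1) ^ 2 * rho n z)
    (hD : Integrable fun z => z i ^ 2 * f z ^ 2 * rho n z) :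
    Integrable fun z => z i * f z * fderiv ℝ f z (Pi.single i 1) * rho n z := by
  have hmeas : AEStronglyMeasurable (fun z => fderiv ℝ f z (Pi.single i 1)) :=
    (measurable_fderiv_apply_const ℝ f _).aestronglyMeasurable
  have hcont : Continuous fun z => z i * f z := (continuous_apply i).mul hf
  refine ((hD.add hB).div_const 2).mono' ((hcont.aestronglyMeasurable.mul hmeas).mul
    (continuous_rho n).aestronglyMeasurable) (.of_forall fun z => ?_)
  set d := fderiv ℝ f z (Pi.single i 1)
  have hprod : |z i * f z * d| ≤ ((z i * f z) ^ 2 + d ^ 2) / 2 := by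
    nlinarith [abs_mul_abs_self (z i * f z), abs_mul_abs_self d, abs_mul (z i * f z) d,
      sq_nonneg (|z i * f z| - |d|)]
  rw [Real.norm_eq_abs, abs_mul, abs_of_pos (rho_pos n z)]
  calc |z i * f z * d| * rho n z ≤ ((z i * f z) ^ 2 + d ^ 2) / 2 * rho n z := by
        gcongr; exact (rho_pos n z).le
    _ = _ := by simp only [Pi.add_apply]; ring

theorem integral_coord_sq_mul_sq_mul_rho_eq (hf : Differentiable ℝ f) (i : Fin n)
    (hA : Integrable fun z => f z ^ 2 * rho n z)
    (hB : Integrable fun z => fderiv ℝ f z (Pi.single i 1) ^ 2 * rho n z)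
    (hD : Integrable fun z => z i ^ 2 * f z ^ 2 * rho n z) :
    ∫ z, z i ^ 2 * f z ^ 2 * rho n z =
      2 * (∫ z, f z ^ 2 * rho n z) +
        4 * ∫ z, z i * f z * fderiv ℝ f z (Pi.single i 1) * rho n z := by
  have hE := integrable_coord_mul_mul_fderiv_mul_rho hf.continuous i hB hD
  have hcoord : ∀ z : Fin n → ℝ, fderiv ℝ (fun w : Fin n → ℝ => w i) z (Pi.single i 1) = 1 :=
    fun z => by simp [(hasFDerivAt_apply i z).fderiv]
  have hderiv : ∀ z, z i * fderiv ℝ (fun w => f w ^ 2 * rho n w) z (Pi.single i 1) =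
      2 * (z i * f z * fderiv ℝ f z (Pi.single i 1) * rho n z) -
        1 / 2 * (z i ^ 2 * f z ^ 2 * rho n z) :=
    fun z => by rw [fderiv_sq_mul_rho_single (hf z)]; ring
  have h₁ : Integrable fun z => fderiv ℝ (fun w : Fin n → ℝ => w i) z (Pi.single i 1) *
      (f z ^ 2 * rho n z) := by
    simpa only [hcoord, one_mul] using hA
  have h₂ : Integrable fun z => z i * fderiv ℝ (fun w => f w ^ 2 * rho n w) z (Pi.single i 1) := by
    simp only [hderiv]
    exact (hE.const_mul 2).sub (hD.const_mul (1 / 2))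
  have ibp := integral_mul_fderiv_eq_neg_fderiv_mul_of_integrable h₁ h₂
    (integrable_coord_mul_sq_mul_rho hf.continuous i hA hD)
    (fun z _ => (hasFDerivAt_apply i z).differentiableAt)
    (fun z _ => ((hf z).pow 2).mul (hasFDerivAt_rho n z).differentiableAt)
  simp only [hderiv, hcoord, one_mul] at ibp
  rw [integral_sub (hE.const_mul 2) (hD.const_mul (1 / 2)), integral_const_mul,
    integral_const_mul] at ibp
  linarith

theorem integral_coord_sq_mul_sq_mul_rho_le (hf : Differentiable ℝ f) (i : Fin n)
    (hA : Integrable fun z => f z ^ 2 * rho n z)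
    (hB : Integrable fun z => fderiv ℝ f z (Pi.single i 1) ^ 2 * rho n z)
    (hD : Integrable fun z => z i ^ 2 * f z ^ 2 * rho n z) :
    ∫ z, z i ^ 2 * f z ^ 2 * rho n z ≤
      4 * (∫ z, f z ^ 2 * rho n z) + 16 * ∫ z, fderiv ℝ f z (Pi.single i 1) ^ 2 * rho n z := by
  have hcross : ∫ z, z i * f z * fderiv ℝ f z (Pi.single i 1) * rho n z ≤
      ∫ z, (1 / 8 * (z i ^ 2 * f z ^ 2 * rho n z) +
        2 * (fderiv ℝ f z (Pi.single i 1) ^ 2 * rho n z)) := by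
    refine integral_mono (integrable_coord_mul_mul_fderiv_mul_rho hf.continuous i hB hD)
      ((hD.const_mul _).add (hB.const_mul _)) fun z => ?_
    nlinarith [mul_nonneg (sq_nonneg (z i * f z - 4 * fderiv ℝ f z (Pi.single i 1)))
      (rho_pos n z).le]
  rw [integral_add (hD.const_mul _) (hB.const_mul _), integral_const_mul,
    integral_const_mul] at hcross
  linarith [integral_coord_sq_mul_sq_mul_rho_eq hf i hA hB hD]

theorem sum_integral_coord_sq_mul_sq_mul_rho_le (hf : Differentiable ℝ f)
    (hA : Integrable fun z => f z ^ 2 * rho n z)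
    (hB : ∀ i, Integrable fun z => fderiv ℝ f z (Pi.single i 1) ^ 2 * rho n z)
    (hD : ∀ i, Integrable fun z => z i ^ 2 * f z ^ 2 * rho n z) :
    ∑ i, ∫ z, z i ^ 2 * f z ^ 2 * rho n z ≤
      4 * n * (∫ z, f z ^ 2 * rho n z) +
        16 * ∑ i, ∫ z, fderiv ℝ f z (Pi.single i 1) ^ 2 * rho n z :=
  calc ∑ i, ∫ z, z i ^ 2 * f z ^ 2 * rho n z
      ≤ ∑ i, (4 * (∫ z, f z ^ 2 * rho n z) +
          16 * ∫ z, fderiv ℝ f z (Pi.single i 1) ^ 2 * rho n z) :=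
        Finset.sum_le_sum fun i _ => integral_coord_sq_mul_sq_mul_rho_le hf i hA (hB i) (hD i)
    _ = _ := by
        simp only [Finset.sum_add_distrib, ← Finset.mul_sum, Finset.sum_const,
          Finset.card_univ, Fintype.card_fin, nsmul_eq_mul]
        ring

end

theorem weighted_poincare_general (n : ℕ) :
    ∃ C : ℝ, 0 < C ∧ ∀ f : (Fin n → ℝ) → ℝ, ContDiff ℝ 1 f →
      Integrable (fun z : Fin n → ℝ => (f z) ^ 2 * rho n z) →
      Integrable (fun z : Fin n → ℝ =>
        (∑ i, (fderiv ℝ f z (Pi.single i 1)) ^ 2) * rho n z) →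
      (∫ z : Fin n → ℝ, (∑ i, (z i) ^ 2) * (f z) ^ 2 * rho n z) ≤
        C * ((∫ z : Fin n → ℝ, (f z) ^ 2 * rho n z) +
          ∫ z : Fin n → ℝ, (∑ i, (fderiv ℝ f z (Pi.single i 1)) ^ 2) * rho n z) := by
  refine ⟨4 * n + 16, by positivity, fun f hf hA hB => ?_⟩
  have hfc : Continuous f := hf.continuous
  simp only [Finset.sum_mul] at hB ⊢
  have hBi : ∀ i, Integrable fun z => fderiv ℝ f z (Pi.single i 1) ^ 2 * rho n z := fun i =>
    hB.of_sum_of_nonneg (fun j _ z => mul_nonneg (sq_nonneg _) (rho_pos n z).le)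
      (Finset.mem_univ i) <|
        ((measurable_fderiv_apply_const ℝ f _).pow_const 2).aestronglyMeasurable.mul
          (continuous_rho n).aestronglyMeasurable
  rw [integral_finsetSum _ fun i _ => hBi i]
  have hA₀ := integral_sq_mul_rho_nonneg n f
  have hB₀ := Finset.sum_nonneg fun i (_ : i ∈ Finset.univ) =>
    integral_sq_mul_rho_nonneg n fun z => fderiv ℝ f z (Pi.single i 1)
  by_cases hD : Integrable fun z => ∑ i, z i ^ 2 * f z ^ 2 * rho n z
  · have hDi : ∀ i, Integrable fun z => z i ^ 2 * f z ^ 2 * rho n z := fun i =>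
      hD.of_sum_of_nonneg (fun j _ z => mul_nonneg (mul_nonneg (sq_nonneg _) (sq_nonneg _))
        (rho_pos n z).le) (Finset.mem_univ i) (Continuous.aestronglyMeasurable (by fun_prop))
    rw [integral_finsetSum _ fun i _ => hDi i]
    have := sum_integral_coord_sq_mul_sq_mul_rho_le (hf.differentiable one_ne_zero) hA hBi hDi
    nlinarith [mul_nonneg (Nat.cast_nonneg (α := ℝ) n) hB₀]
  · -- the left-hand side is then the junk value `0`
    rw [integral_undef hD]
    exact mul_nonneg (by positivity) (add_nonneg hA₀ hB₀)

theorem weighted_poincare (n : ℕ) (hn : 1 ≤ n) :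
    ∃ C : ℝ, 0 < C ∧ ∀ f : (Fin n → ℝ) → ℝ, ContDiff ℝ 1 f →
      Integrable (fun z : Fin n → ℝ => (f z) ^ 2 * rho n z) →
      Integrable (fun z : Fin n → ℝ =>
        (∑ i, (fderiv ℝ f z (Pi.single i 1)) ^ 2) * rho n z) →
      (∫ z : Fin n → ℝ, (∑ i, (z i) ^ 2) * (f z) ^ 2 * rho n z) ≤
        C * ((∫ z : Fin n → ℝ, (f z) ^ 2 * rho n z) +
          ∫ z : Fin n → ℝ, (∑ i, (fderiv ℝ f z (Pi.single i 1)) ^ 2) * rho n z) :=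
  weighted_poincare_general n
end
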